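/- arXiv:1605.06691 — 4 statements merged into one kernel-verified Lean document; each statement's English description precedes it below -/
import Mathlib

section
/- Suppose 0 < ℓ ≤ 2·arsinh(1), d ≥ 0 with d ≤ arsinh(1), and i ≥ 0 satisfies sinh(i) = cosh(ℓ/2) cosh(d) - sinh(d). Then sinh(i) ≤ (1 + √2) e^(-d). -/
open Real

/-- Case 1 of the upper injectivity radius bound in a collar: if d ≤ arsinh 1. -/
theorem stmt_4 (ℓ d i : ℝ) (hℓ0 : 0 < ℓ) (hℓ : ℓ ≤ 2 * arsinh 1)
    (hd0 : 0 ≤ d) (hd : d ≤ arsinh 1) (hi : 0 ≤ i)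
    (heq : sinh i = cosh (ℓ / 2) * cosh d - sinh d) :
    sinh i ≤ (1 + Real.sqrt 2) * Real.exp (-d) := by
  have h2 : Real.sqrt 2 ^ 2 = 2 := Real.sq_sqrt (by norm_num)
  have hcosh : cosh (ℓ / 2) ≤ Real.sqrt 2 := by
    have : cosh (ℓ / 2) ≤ cosh (arsinh 1) := by
      rw [Real.cosh_le_cosh]
      rw [abs_of_nonneg (by linarith), abs_of_nonneg (by simpa using Real.arsinh_le_arsinh.mpr (show (0:ℝ) ≤ 1 by norm_num))]
      linarith
    rwa [Real.cosh_arsinh, show (1:ℝ) + 1^2 = 2 by norm_num] at this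
  have hexp : Real.exp d ≤ 1 + Real.sqrt 2 := by
    have := Real.exp_le_exp.mpr hd
    rwa [Real.arsinh, Real.exp_log (by positivity),
      show (1:ℝ) + 1^2 = 2 by norm_num] at this
  have hcd : (0:ℝ) < cosh d := Real.cosh_pos d
  have h1 : sinh i ≤ Real.sqrt 2 * cosh d - sinh d := by
    rw [heq]
    nlinarith [hcd, hcosh]
  have hepos : (0:ℝ) < Real.exp d := Real.exp_pos d
  have hs2 : (0:ℝ) ≤ Real.sqrt 2 := Real.sqrt_nonneg 2
  have key : Real.sqrt 2 * cosh d - sinh d ≤ (1 + Real.sqrt 2) * Real.exp (-d) := by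
    rw [Real.cosh_eq, Real.sinh_eq, Real.exp_neg]
    have hinv : (Real.exp d)⁻¹ * Real.exp d = 1 := inv_mul_cancel₀ (ne_of_gt hepos)
    nlinarith [hinv, hexp, h2, mul_le_mul_of_nonneg_left hexp (inv_pos.mpr hepos).le]
  linarith
end

section
/- Suppose ℓ > 0 and d > arsinh(1) satisfy sinh(ℓ/2) sinh(d) ≤ 1, and i ≥ 0 satisfies sinh(i) = cosh(ℓ/2) cosh(d) - sinh(d). Then sinh(i) ≤ (1 + √2) e^(-d). -/
open Real

/-! Write `t = cosh d / sinh d`. The collar constraint gives `cosh (ℓ/2) ≤ t`, hence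
`sinh i ≤ t cosh d - sinh d`. Since `cosh d = t sinh d` and `e^(-d) = cosh d - sinh d`,
the difference `t cosh d - sinh d - (1 + √2) e^(-d)` factors as `sinh d (t - 1) (t - √2)`,
which is `≤ 0` because `1 ≤ t`, and `t² = 1 + 1 / sinh² d < 2` once `sinh d > 1`. -/

namespace Real

theorem cosh_le_cosh_div_sinh_of_sinh_mul_sinh_le_one {x y : ℝ} (hx : 0 ≤ x) (hy : 0 < y)
    (h : sinh x * sinh y ≤ 1) : cosh x ≤ cosh y / sinh y := by
  have hsy : 0 < sinh y := sinh_pos_iff.mpr hy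
  have hsx : 0 ≤ sinh x := sinh_nonneg_iff.mpr hx
  rw [le_div_iff₀ hsy, ← pow_le_pow_iff_left₀ (by positivity) (cosh_pos y).le two_ne_zero]
  calc (cosh x * sinh y) ^ 2 = sinh y ^ 2 + (sinh x * sinh y) ^ 2 := by rw [mul_pow, cosh_sq']; ring
    _ ≤ sinh y ^ 2 + 1 := by gcongr; nlinarith [mul_nonneg hsx hsy.le]
    _ = cosh y ^ 2 := (cosh_sq y).symm

theorem one_le_cosh_div_sinh {y : ℝ} (hy : 0 < y) : 1 ≤ cosh y / sinh y := by
  rw [le_div_iff₀ (sinh_pos_iff.mpr hy), one_mul, ← sub_nonneg, cosh_sub_sinh]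
  exact (exp_pos _).le

theorem cosh_div_sinh_lt_sqrt_two {y : ℝ} (hy : 1 < sinh y) : cosh y / sinh y < √2 := by
  rw [div_lt_iff₀ (one_pos.trans hy),
    ← pow_lt_pow_iff_left₀ (cosh_pos y).le (by positivity) two_ne_zero, mul_pow,
    sq_sqrt zero_le_two, cosh_sq]
  nlinarith

theorem mul_cosh_sub_sinh_sub_le {C d : ℝ} (hd : 0 < d) (hC : C ≤ cosh d / sinh d) :
    C * cosh d - sinh d - (1 + √2) * exp (-d)
      ≤ sinh d * (cosh d / sinh d - 1) * (cosh d / sinh d - √2) := by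
  set t := cosh d / sinh d
  have hcosh : cosh d = t * sinh d := (div_mul_cancel₀ _ (sinh_pos_iff.mpr hd).ne').symm
  have hCc : C * cosh d ≤ t * cosh d := mul_le_mul_of_nonneg_right hC (cosh_pos d).le
  rw [← cosh_sub_sinh, hcosh]
  rw [hcosh] at hCc
  linarith

end Real

theorem stmt_5_general (ℓ d i : ℝ) (hℓ0 : 0 < ℓ) (hd : arsinh 1 < d)
    (hcollar : sinh (ℓ / 2) * sinh d ≤ 1)
    (heq : sinh i = cosh (ℓ / 2) * cosh d - sinh d) :
    sinh i ≤ (1 + Real.sqrt 2) * Real.exp (-d) := by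
  have hsinh : 1 < sinh d := by simpa using sinh_lt_sinh.mpr hd
  have hd0 : 0 < d := sinh_pos_iff.mp (one_pos.trans hsinh)
  have hcosh := cosh_le_cosh_div_sinh_of_sinh_mul_sinh_le_one (by positivity) hd0 hcollar
  have hfactor : sinh d * (cosh d / sinh d - 1) * (cosh d / sinh d - √2) ≤ 0 :=
    mul_nonpos_of_nonneg_of_nonpos
      (mul_nonneg (sinh_pos_iff.mpr hd0).le (sub_nonneg.mpr (one_le_cosh_div_sinh hd0)))
      (sub_nonpos.mpr (cosh_div_sinh_lt_sqrt_two hsinh).le)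
  linarith [mul_cosh_sub_sinh_sub_le hd0 hcosh]

/-- Case 2 of the upper injectivity radius bound in a collar: if d > arsinh 1
and sinh(ℓ/2) sinh(d) ≤ 1. -/
theorem stmt_5 (ℓ d i : ℝ) (hℓ0 : 0 < ℓ) (hd : arsinh 1 < d)
    (hcollar : sinh (ℓ / 2) * sinh d ≤ 1) (hi : 0 ≤ i)
    (heq : sinh i = cosh (ℓ / 2) * cosh d - sinh d) :
    sinh i ≤ (1 + Real.sqrt 2) * Real.exp (-d) :=
  stmt_5_general ℓ d i hℓ0 hd hcollar heq
end

section
/- Let ℓ ∈ (0, 2 arsinh(1)] and d ≥ 0 with sinh(ℓ/2) sinh(d) ≤ 1. Define i by sinh(i) = cosh(ℓ/2) cosh(d) - sinh(d). Then i ≥ ℓ/2; moreover when d attains its maximal value (sinh(ℓ/2) sinh(d) = 1), one has i = ℓ/2, i.e. sinh(ℓ/2) = cosh(ℓ/2) cosh(d) - sinh(d) when sinh(ℓ/2) sinh(d) = 1. -/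
open Real

/-- In a collar, the injectivity radius is at least ℓ/2, with equality at the centre
(where sinh(ℓ/2) sinh d = 1). -/
theorem stmt_14 (ℓ d i : ℝ) (hℓ : ℓ ∈ Set.Ioc 0 (2 * arsinh 1)) (hd : 0 ≤ d)
    (hcollar : sinh (ℓ / 2) * sinh d ≤ 1) (hi : 0 ≤ i)
    (heq : sinh i = cosh (ℓ / 2) * cosh d - sinh d) :
    ℓ / 2 ≤ i ∧
      (sinh (ℓ / 2) * sinh d = 1 →
        sinh (ℓ / 2) = cosh (ℓ / 2) * cosh d - sinh d) := by
  have hs : 0 ≤ sinh (ℓ / 2) := by rw [← Real.sinh_zero]; exact Real.sinh_le_sinh.2 (by linarith [hℓ.1])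
  have hx : 0 ≤ sinh d := by rw [← Real.sinh_zero]; exact Real.sinh_le_sinh.2 hd
  have hc1 : cosh (ℓ / 2) ^ 2 = sinh (ℓ / 2) ^ 2 + 1 := by
    rw [Real.cosh_sq]
  have hc2 : cosh d ^ 2 = sinh d ^ 2 + 1 := by rw [Real.cosh_sq]
  have hcp1 : 0 < cosh (ℓ / 2) := Real.cosh_pos _
  have hcp2 : 0 < cosh d := Real.cosh_pos _
  have key : sinh (ℓ / 2) ≤ cosh (ℓ / 2) * cosh d - sinh d := by
    nlinarith [sq_nonneg (sinh (ℓ / 2) * sinh d - 1), sq_nonneg (cosh (ℓ / 2) * cosh d - (sinh (ℓ / 2) + sinh d)), mul_pos hcp1 hcp2]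
  constructor
  · rw [← Real.sinh_le_sinh, heq]
    exact key
  · intro h
    nlinarith [sq_nonneg (cosh (ℓ / 2) * cosh d - (sinh (ℓ / 2) + sinh d)), mul_pos hcp1 hcp2]
end

section
/- Let L : [0, T) → [0, ∞) be continuous, nonincreasing with L(t) → 0 as t → T, let K₀ > 0, and for t ∈ [0,T) and μ ≥ 0 let S^μ(t) ⊂ M be defined (for a fixed function I : M × [0,T) → [0,∞) continuous in t with |I(p,t₁)^{1/2} - I(p,t₂)^{1/2}| ≤ K₀(L(t₁)-L(t₂)) for t₁ ≤ t₂) by S^μ(t) = {p : I(p,t) > (K₀L(t)+μ)²}. Then ⋃_{t} S⁰(t) = ⋃_{μ>0, t} S^μ(t) = {p : liminf_{t→T} I(p,t) > 0}. -/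
open Filter

/-- The union over times of the super-thick sets S^μ(t) (for μ = 0, or over all
μ > 0) equals the set of points whose "injectivity radius" I(p,t) has positive
liminf as t → T. -/
theorem stmt_19 (M : Type*) (T K₀ : ℝ) (hT : 0 < T) (hK₀ : 0 < K₀)
    (L : ℝ → ℝ) (hLcont : ContinuousOn L (Set.Ico 0 T))
    (hL0 : ∀ t ∈ Set.Ico 0 T, 0 ≤ L t)
    (hLmono : AntitoneOn L (Set.Ico 0 T))
    (hLlim : Tendsto L (nhdsWithin T (Set.Iio T)) (nhds 0))
    (I : M → ℝ → ℝ)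
    (hI0 : ∀ p, ∀ t ∈ Set.Ico 0 T, 0 ≤ I p t)
    (hIcont : ∀ p, ContinuousOn (I p) (Set.Ico 0 T))
    (hest : ∀ p, ∀ t₁ ∈ Set.Ico 0 T, ∀ t₂ ∈ Set.Ico 0 T, t₁ ≤ t₂ →
      |Real.sqrt (I p t₁) - Real.sqrt (I p t₂)| ≤ K₀ * (L t₁ - L t₂))
    (S : ℝ → ℝ → Set M)
    (hS : ∀ μ t, S μ t = {p | (K₀ * L t + μ) ^ 2 < I p t}) :
    (⋃ t ∈ Set.Ico 0 T, S 0 t)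
        = {p | 0 < liminf (fun t => I p t) (nhdsWithin T (Set.Iio T))} ∧
    (⋃ μ ∈ Set.Ioi (0:ℝ), ⋃ t ∈ Set.Ico 0 T, S μ t)
        = {p | 0 < liminf (fun t => I p t) (nhdsWithin T (Set.Iio T))} := by
  set F := nhdsWithin T (Set.Iio T) with hF
  have hFne : F.NeBot := by
    rw [hF]
    exact nhdsLT_neBot T
  have hmemT : ∀ᶠ t in F, t ∈ Set.Ioo 0 T := by
    rw [hF]
    exact Ioo_mem_nhdsLT_of_mem ⟨hT, le_refl _⟩
  have h0T : (0 : ℝ) ∈ Set.Ico 0 T := ⟨le_refl 0, hT⟩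
  -- uniform upper bound for I p on [0, T)
  have hub : ∀ p, ∀ t ∈ Set.Ico 0 T,
      I p t ≤ (Real.sqrt (I p 0) + K₀ * L 0) ^ 2 := by
    intro p t ht
    have h1 := hest p 0 h0T t ht ht.1
    have h2 : Real.sqrt (I p t) ≤ Real.sqrt (I p 0) + K₀ * (L 0 - L t) := by
      have := abs_le.1 h1
      linarith [this.2]
    have h3 : Real.sqrt (I p t) ≤ Real.sqrt (I p 0) + K₀ * L 0 := by
      have := hL0 t ht
      nlinarith [hK₀.le]
    calc I p t = Real.sqrt (I p t) ^ 2 := (Real.sq_sqrt (hI0 p t ht)).symm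
      _ ≤ (Real.sqrt (I p 0) + K₀ * L 0) ^ 2 := by
          have h4 : 0 ≤ Real.sqrt (I p t) := Real.sqrt_nonneg _
          nlinarith
  -- membership in S 0 t₀ implies positive liminf
  have hBC : ∀ p, p ∈ (⋃ t ∈ Set.Ico 0 T, S 0 t) →
      0 < liminf (fun t => I p t) F := by
    intro p hp
    simp only [Set.mem_iUnion] at hp
    obtain ⟨t₀, ht₀, hpt₀⟩ := hp
    rw [hS] at hpt₀
    have hpt₀' : (K₀ * L t₀) ^ 2 < I p t₀ := by simpa using hpt₀
    have hKL₀ : 0 ≤ K₀ * L t₀ := mul_nonneg hK₀.le (hL0 t₀ ht₀)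
    have hsq : K₀ * L t₀ < Real.sqrt (I p t₀) :=
      (Real.lt_sqrt hKL₀).2 hpt₀'
    set δ := Real.sqrt (I p t₀) - K₀ * L t₀ with hδ
    have hδpos : 0 < δ := by simp [hδ]; linarith
    have hev : ∀ᶠ t in F, δ ^ 2 ≤ I p t := by
      have hmem' : ∀ᶠ t in F, t ∈ Set.Ioo t₀ T := by
        rw [hF]; exact Ioo_mem_nhdsLT_of_mem ⟨ht₀.2, le_refl _⟩
      filter_upwards [hmem'] with t ht
      have htI : t ∈ Set.Ico 0 T := ⟨le_trans ht₀.1 ht.1.le, ht.2⟩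
      have h1 := hest p t₀ ht₀ t htI ht.1.le
      have h2 := abs_le.1 h1
      have hLt : 0 ≤ L t := hL0 t htI
      have h3 : δ ≤ Real.sqrt (I p t) := by
        simp only [hδ]
        nlinarith [hK₀.le]
      calc δ ^ 2 ≤ Real.sqrt (I p t) ^ 2 := by nlinarith
        _ = I p t := Real.sq_sqrt (hI0 p t htI)
    have hcb : F.IsCoboundedUnder (· ≥ ·) (fun t => I p t) := by
      apply Filter.IsBoundedUnder.isCoboundedUnder_ge
      refine ⟨(Real.sqrt (I p 0) + K₀ * L 0) ^ 2, eventually_map.2 ?_⟩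
      filter_upwards [hmemT] with t ht
      exact hub p t ⟨ht.1.le, ht.2⟩
    have := le_liminf_of_le hcb hev
    exact lt_of_lt_of_le (by positivity) this
  -- positive liminf implies membership in some S μ t with μ > 0
  have hCA : ∀ p, 0 < liminf (fun t => I p t) F →
      p ∈ ⋃ μ ∈ Set.Ioi (0:ℝ), ⋃ t ∈ Set.Ico 0 T, S μ t := by
    intro p hp
    set c := liminf (fun t => I p t) F with hc
    have hbd : F.IsBoundedUnder (· ≥ ·) (fun t => I p t) := by
      refine ⟨0, eventually_map.2 ?_⟩
      filter_upwards [hmemT] with t ht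
      exact hI0 p t ⟨ht.1.le, ht.2⟩
    have hev : ∀ᶠ t in F, c / 2 < I p t :=
      eventually_lt_of_lt_liminf (by linarith) hbd
    set μ := Real.sqrt (c / 2) / 4 with hμ
    have hc2 : 0 < c / 2 := by linarith
    have hsqpos : 0 < Real.sqrt (c / 2) := Real.sqrt_pos.2 hc2
    have hμpos : 0 < μ := by positivity
    have hevL : ∀ᶠ t in F, K₀ * L t < Real.sqrt (c / 2) / 2 := by
      have : ∀ᶠ t in F, L t < Real.sqrt (c / 2) / 2 / K₀ := by
        apply hLlim.eventually_lt_const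
        positivity
      filter_upwards [this] with t ht
      rw [mul_comm]
      exact (lt_div_iff₀ hK₀).1 ht
    obtain ⟨t, ht1, ht2, ht3⟩ := (hmemT.and (hev.and hevL)).exists
    have htI : t ∈ Set.Ico 0 T := ⟨ht1.1.le, ht1.2⟩
    simp only [Set.mem_iUnion]
    refine ⟨μ, hμpos, t, htI, ?_⟩
    rw [hS]
    show (K₀ * L t + μ) ^ 2 < I p t
    have hKL : 0 ≤ K₀ * L t := mul_nonneg hK₀.le (hL0 t htI)
    have h1 : K₀ * L t + μ < Real.sqrt (c / 2) := by
      simp only [hμ]; linarith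
    have h2 : Real.sqrt (c / 2) ^ 2 = c / 2 := Real.sq_sqrt hc2.le
    nlinarith
  -- S μ t ⊆ S 0 t for μ > 0
  have hAB : (⋃ μ ∈ Set.Ioi (0:ℝ), ⋃ t ∈ Set.Ico 0 T, S μ t) ⊆
      ⋃ t ∈ Set.Ico 0 T, S 0 t := by
    intro p hp
    simp only [Set.mem_iUnion] at hp ⊢
    obtain ⟨μ, hμ, t, ht, hpt⟩ := hp
    refine ⟨t, ht, ?_⟩
    rw [hS] at hpt ⊢
    have hKL : 0 ≤ K₀ * L t := mul_nonneg hK₀.le (hL0 t ht)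
    have : (K₀ * L t + μ) ^ 2 < I p t := hpt
    show (K₀ * L t + 0) ^ 2 < I p t
    have hμ' : 0 < μ := hμ
    nlinarith
  constructor
  · apply Set.Subset.antisymm
    · intro p hp; exact hBC p hp
    · intro p hp; exact hAB (hCA p hp)
  · apply Set.Subset.antisymm
    · intro p hp; exact hBC p (hAB hp)
    · intro p hp; exact hCA p hp
end
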